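/- For every prior 𝒟 there exists a signaling scheme Z₀, each of whose signals is either a singleton signal or an equal-revenue binary signal, such that for every k ∈ [n], 4·Σ_{i=1}^k f_𝒟(vᵢ)·cs_{vᵢ}(Z₀) ≥ V_k − max_{i∈[k]} ( vᵢ · Σ_{j=i}^k f_𝒟(vⱼ) ), where V_k = Σ_{i=1}^k vᵢ·f_𝒟(vᵢ). -/

import Mathlib

/-!
The scheme is a greedy matching. Half of the mass of each value `v i` is offered as supply and
half as demand. Demands `j` are processed in increasing order, each served by the supplies `i < j`
in increasing order: `a` units of `v i` placed in the equal-revenue signal on `(v i, v j)` carry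
`a * v i / (v j - v i)` units of `v j`, which pay the price `v i` and so receive surplus mass
`a * v i`. Whatever mass remains goes into singleton signals.

Fix a prefix `k` and let `t ≤ k` be the least value whose supply is not exhausted by the demands
`≤ k` (`t = k` qualifies). Each `i < t` has spent its supply, so `v i * f i` is at most twice the
surplus it creates. Each `j ∈ (t, k]` was fully served by supplies `≤ t`, since otherwise `t` would
have supplied more, so `(v j - v t) * f j` is at most twice the surplus `j` receives. Summing,
`V_k ≤ v t * ∑_{i ∈ [t, k]} f i + 4 * (surplus of the prefix)`.
-/

open Finset MeasureTheory

namespace PD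

noncomputable section

/-- Complementary CDF of a mass function `fS` at value `v i`. -/
def G {n : ℕ} (v fS : Fin n → ℝ) (i : Fin n) : ℝ :=
  ∑ j ∈ Finset.univ.filter (fun j => v i ≤ v j), fS j

/-- A signal is a probability mass function on the values. -/
def IsSignal {n : ℕ} (fS : Fin n → ℝ) : Prop :=
  (∀ i, 0 ≤ fS i) ∧ ∑ i, fS i = 1

/-- The index of the seller's price: the smallest index maximizing `v i * G i`. -/
def priceIdx {n : ℕ} [NeZero n] (v fS : Fin n → ℝ) : Fin n :=
  (Finset.univ.filter (fun i => ∀ j, v j * G v fS j ≤ v i * G v fS i)).min' (by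
    haveI : Nonempty (Fin n) := ⟨⟨0, Nat.pos_of_ne_zero (NeZero.ne n)⟩⟩
    obtain ⟨b, _, hb⟩ := Finset.exists_max_image (Finset.univ : Finset (Fin n))
      (fun i => v i * G v fS i) Finset.univ_nonempty
    exact ⟨b, Finset.mem_filter.mpr ⟨Finset.mem_univ _, fun j => hb j (Finset.mem_univ _)⟩⟩)

/-- Consumer surplus of value `v i` under signal `fS`. -/
def cs {n : ℕ} [NeZero n] (v fS : Fin n → ℝ) (i : Fin n) : ℝ :=
  if v (priceIdx v fS) ≤ v i then v i - v (priceIdx v fS) else 0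

/-- Revenue of a signal: the maximum of `v i * G i`. -/
def revSig {n : ℕ} [NeZero n] (v fS : Fin n → ℝ) : ℝ :=
  Finset.univ.sup' (by
    haveI : Nonempty (Fin n) := ⟨⟨0, Nat.pos_of_ne_zero (NeZero.ne n)⟩⟩
    exact Finset.univ_nonempty) (fun i => v i * G v fS i)

/-- A signaling scheme for prior mass function `f`. -/
structure Scheme (n : ℕ) (f : Fin n → ℝ) where
  Q : ℕ
  sig : Fin Q → Fin n → ℝ
  wt : Fin Q → ℝ
  sig_isSignal : ∀ q, IsSignal (sig q)
  wt_nonneg : ∀ q, 0 ≤ wt q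
  wt_sum : ∑ q, wt q = 1
  bayes : ∀ i, ∑ q, wt q * sig q i = f i

/-- Expected consumer surplus of value `v i` under scheme `Z`. -/
def csZ {n : ℕ} [NeZero n] (v f : Fin n → ℝ) (Z : Scheme n f) (i : Fin n) : ℝ :=
  ∑ q, cs v (Z.sig q) i * (Z.wt q * Z.sig q i / f i)

/-- Expected revenue of a scheme. -/
def revZ {n : ℕ} [NeZero n] (v : Fin n → ℝ) {f : Fin n → ℝ} (Z : Scheme n f) : ℝ :=
  ∑ q, Z.wt q * revSig v (Z.sig q)

/-- A scheme is efficient if on every positive-weight signal, the smallest value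
in the support maximizes `v * G`. -/
def Efficient {n : ℕ} (v : Fin n → ℝ) {f : Fin n → ℝ} (Z : Scheme n f) : Prop :=
  ∀ q, 0 < Z.wt q → ∀ i, (0 < Z.sig q i ∧ ∀ j, 0 < Z.sig q j → i ≤ j) →
    ∀ j, v j * G v (Z.sig q) j ≤ v i * G v (Z.sig q) i

/-- A scheme is monotone if higher values get (weakly) higher expected surplus. -/
def MonotoneScheme {n : ℕ} [NeZero n] (v f : Fin n → ℝ) (Z : Scheme n f) : Prop :=
  ∀ i j : Fin n, v i < v j → csZ v f Z i ≤ csZ v f Z j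

/-- A scheme is buyer-optimal if the total expected consumer surplus equals the
expected value minus the Myerson revenue. -/
def BuyerOptimal {n : ℕ} [NeZero n] (v f : Fin n → ℝ) (Z : Scheme n f) : Prop :=
  ∑ i, f i * csZ v f Z i = (∑ i, f i * v i) - revSig v f

/-- The surplus-mass step function of a scheme: equal to `csZ i` on the quantile
interval `(F(v_{i-1}), F(v_i)]`. -/
def smf {n : ℕ} [NeZero n] (v f : Fin n → ℝ) (Z : Scheme n f) (x : ℝ) : ℝ :=
  ∑ i, if (∑ j ∈ Finset.univ.filter (fun j => j < i), f j) < x ∧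
          x ≤ ∑ j ∈ Finset.univ.filter (fun j => j ≤ i), f j
       then csZ v f Z i else 0

/-- Sorted `m`-prefix sum of `g` on `(0,1]`: the infimum of `∫_T g` over
(measurable) subsets `T` of `(0,1]` of total length `m`. -/
def PF (g : ℝ → ℝ) (m : ℝ) : ℝ :=
  sInf { r : ℝ | ∃ T : Set ℝ, T ⊆ Set.Ioc 0 1 ∧ MeasurableSet T ∧
    volume T = ENNReal.ofReal m ∧ r = ∫ x in T, g x }

/-- Integration `m`-prefix sum of `g`: `∫₀^m g`. -/
def PFV (g : ℝ → ℝ) (m : ℝ) : ℝ := ∫ x in Set.Ioc (0:ℝ) m, g x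

/-- A singleton signal puts all mass on one value. -/
def IsSingleton {n : ℕ} (fS : Fin n → ℝ) : Prop :=
  ∃ i : Fin n, fS = fun j => if j = i then 1 else 0

/-- An equal-revenue binary signal on `v i < v j` puts mass `1 - v i / v j` on
`v i` and `v i / v j` on `v j`. -/
def IsEqRevBinary {n : ℕ} (v : Fin n → ℝ) (fS : Fin n → ℝ) : Prop :=
  ∃ i j : Fin n, v i < v j ∧
    fS = fun l => if l = i then 1 - v i / v j else if l = j then v i / v j else 0

/-- `i` is the smallest value in the support of `fS`. -/
def MinSupp {n : ℕ} (fS : Fin n → ℝ) (i : Fin n) : Prop :=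
  0 < fS i ∧ ∀ j, 0 < fS j → i ≤ j

end

section PrefixSums

variable {α : Type*} [LinearOrder α] [WellFoundedLT α] [LocallyFiniteOrderBot α] {a : α → ℝ} {B : ℝ}

theorem sum_Iio_le_of_ne_zero (hB : 0 ≤ B) (h : ∀ m, a m ≠ 0 → a m ≤ B - ∑ x ∈ Iio m, a x)
    (m : α) : ∑ x ∈ Iio m, a x ≤ B := by
  induction m using WellFoundedLT.induction with
  | ind m ih =>
    rcases (Iio m).eq_empty_or_nonempty with hm | hm
    · simpa [hm] using hB
    set p := (Iio m).max' hm
    have hp : p < m := mem_Iio.mp ((Iio m).max'_mem hm)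
    have hIio : Iio m = Iic p := by
      ext x
      simp only [mem_Iio, mem_Iic]
      exact ⟨fun hx => (Iio m).le_max' x (mem_Iio.mpr hx), fun hx => hx.trans_lt hp⟩
    rw [hIio, ← sum_Iio_add_eq_sum_Iic]
    by_cases hap : a p = 0
    · simpa [hap] using ih p hp
    · linarith [h p hap]

theorem sum_Iic_le_of_ne_zero (hB : 0 ≤ B) (h : ∀ m, a m ≠ 0 → a m ≤ B - ∑ x ∈ Iio m, a x)
    (m : α) : ∑ x ∈ Iic m, a x ≤ B := by
  rw [← sum_Iio_add_eq_sum_Iic]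
  by_cases ham : a m = 0
  · simpa [ham] using sum_Iio_le_of_ne_zero hB h m
  · linarith [h m ham]

end PrefixSums

section Signals

variable {n : ℕ} {v : Fin n → ℝ}

theorem G_eq_sum_Ici (hv : StrictMono v) (fS : Fin n → ℝ) (l : Fin n) :
    G v fS l = ∑ j ∈ Ici l, fS j := by
  rw [G]
  congr 1
  ext j
  simp [hv.le_iff_le]

theorem priceIdx_le [NeZero n] {fS : Fin n → ℝ} {i : Fin n}
    (h : ∀ j, v j * G v fS j ≤ v i * G v fS i) : priceIdx v fS ≤ i :=
  min'_le _ _ (mem_filter.mpr ⟨mem_univ _, h⟩)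

theorem cs_nonneg [NeZero n] (fS : Fin n → ℝ) (l : Fin n) : 0 ≤ cs v fS l := by
  unfold cs
  split_ifs <;> linarith

theorem sub_priceIdx_le_cs [NeZero n] (fS : Fin n → ℝ) (l : Fin n) :
    v l - v (priceIdx v fS) ≤ cs v fS l := by
  unfold cs
  split_ifs <;> linarith

theorem isSignal_single (i : Fin n) : IsSignal (Pi.single i 1 : Fin n → ℝ) :=
  ⟨fun l => by rw [Pi.single_apply]; split_ifs <;> norm_num, by simp⟩

theorem isSingleton_single (i : Fin n) : IsSingleton (Pi.single i 1 : Fin n → ℝ) :=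
  ⟨i, funext fun l => Pi.single_apply i 1 l⟩

noncomputable def eqRevSignal (v : Fin n → ℝ) (i j : Fin n) : Fin n → ℝ :=
  Pi.single i (1 - v i / v j) + Pi.single j (v i / v j)

variable (hv : StrictMono v) (hvpos : ∀ i, 0 < v i)

include hv in
theorem isEqRevBinary_eqRevSignal {i j : Fin n} (hij : i < j) :
    IsEqRevBinary v (eqRevSignal v i j) := by
  refine ⟨i, j, hv hij, funext fun l => ?_⟩
  rcases eq_or_ne l i with rfl | hli
  · simp [eqRevSignal, hij.ne]
  · simp [eqRevSignal, hli, Pi.single_apply]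

include hv in
theorem G_eqRevSignal {i j : Fin n} (l : Fin n) :
    G v (eqRevSignal v i j) l =
      (if l ≤ i then 1 - v i / v j else 0) + (if l ≤ j then v i / v j else 0) := by
  simp [G_eq_sum_Ici hv, eqRevSignal, sum_add_distrib]

include hv hvpos

theorem isSignal_eqRevSignal {i j : Fin n} (hij : i < j) : IsSignal (eqRevSignal v i j) := by
  have hratio : v i / v j ≤ 1 := (div_le_one (hvpos j)).mpr (hv hij).le
  have hratio' : 0 ≤ v i / v j := div_nonneg (hvpos i).le (hvpos j).le
  refine ⟨fun l => ?_, by simp [eqRevSignal, sum_add_distrib]⟩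
  simp only [eqRevSignal, Pi.add_apply, Pi.single_apply]
  split_ifs <;> linarith

theorem priceIdx_eqRevSignal_le [NeZero n] {i j : Fin n} (hij : i < j) :
    priceIdx v (eqRevSignal v i j) ≤ i := by
  refine priceIdx_le fun l => ?_
  have hvj := hvpos j
  rw [G_eqRevSignal hv, G_eqRevSignal hv, if_pos le_rfl, if_pos hij.le]
  by_cases hli : l ≤ i
  · rw [if_pos hli, if_pos (hli.trans hij.le)]
    simpa using hv.monotone hli
  by_cases hlj : l ≤ j
  · rw [if_neg hli, if_pos hlj]
    calc v l * (0 + v i / v j) ≤ v j * (v i / v j) := by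
          rw [zero_add]
          gcongr
          · exact div_nonneg (hvpos i).le hvj.le
          · exact hv.monotone hlj
      _ = v i * (1 - v i / v j + v i / v j) := by field_simp; ring
  · rw [if_neg hli, if_neg hlj]
    simp [(hvpos i).le]

theorem sub_le_cs_eqRevSignal [NeZero n] {i j : Fin n} (hij : i < j) (l : Fin n) :
    v l - v i ≤ cs v (eqRevSignal v i j) l :=
  le_trans (by gcongr; exact hv.monotone (priceIdx_eqRevSignal_le hv hvpos hij))
    (sub_priceIdx_le_cs _ l)

end Signals

namespace Scheme

variable {n : ℕ} {f : Fin n → ℝ} {ι : Type*} [Fintype ι]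

noncomputable def ofFintype (sig : ι → Fin n → ℝ) (wt : ι → ℝ) (hsig : ∀ x, IsSignal (sig x))
    (hwt : ∀ x, 0 ≤ wt x) (hbayes : ∀ l, ∑ x, wt x * sig x l = f l) (hf : ∑ l, f l = 1) :
    Scheme n f where
  Q := Fintype.card ι
  sig q := sig ((Fintype.equivFin ι).symm q)
  wt q := wt ((Fintype.equivFin ι).symm q)
  sig_isSignal q := hsig _
  wt_nonneg q := hwt _
  wt_sum := by
    rw [(Fintype.equivFin ι).symm.sum_comp wt, ← hf]
    calc ∑ x, wt x = ∑ x, ∑ l, wt x * sig x l := by simp [← mul_sum, (hsig _).2]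
      _ = ∑ l, f l := by rw [sum_comm]; exact sum_congr rfl fun l _ => hbayes l
  bayes l := by rw [← hbayes l]; exact (Fintype.equivFin ι).symm.sum_comp (fun x => wt x * sig x l)

theorem mul_csZ_ofFintype [NeZero n] (v : Fin n → ℝ) (sig : ι → Fin n → ℝ) (wt : ι → ℝ)
    (hsig : ∀ x, IsSignal (sig x)) (hwt : ∀ x, 0 ≤ wt x)
    (hbayes : ∀ l, ∑ x, wt x * sig x l = f l) (hf : ∑ l, f l = 1) {l : Fin n} (hl : f l ≠ 0) :
    f l * csZ v f (ofFintype sig wt hsig hwt hbayes hf) l = ∑ x, wt x * sig x l * cs v (sig x) l := by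
  rw [csZ, mul_sum]
  refine ((Fintype.equivFin ι).symm.sum_comp
    (fun x => f l * (cs v (sig x) l * (wt x * sig x l / f l)))).trans (sum_congr rfl fun x _ => ?_)
  field_simp

end Scheme

noncomputable section Greedy

variable {n : ℕ} (v f : Fin n → ℝ)

def exchangeRate (i j : Fin n) : ℝ := v i / (v j - v i)

/-- The mass of `v i` that the greedy matching puts into the equal-revenue signal on `(v i, v j)`:
the smaller of what is left of the supply `f i / 2` of `i` and of the demand `f j / 2` of `j`, the
latter converted at `exchangeRate v i j` units of `v j` per unit of `v i`. -/
def greedyAlloc (i j : Fin n) : ℝ :=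
  if i < j then
    min (f i / 2 - ∑ j' ∈ (Iio j).attach, greedyAlloc i j')
      ((f j / 2 - ∑ i' ∈ (Iio i).attach, greedyAlloc i' j * exchangeRate v i' j) /
        exchangeRate v i j)
  else 0
termination_by ((j : ℕ), (i : ℕ))
decreasing_by
  · exact Prod.Lex.left _ _ (Fin.lt_def.mp (mem_Iio.mp j'.2))
  · exact Prod.Lex.right _ (Fin.lt_def.mp (mem_Iio.mp i'.2))

theorem greedyAlloc_of_lt {i j : Fin n} (h : i < j) :
    greedyAlloc v f i j =
      min (f i / 2 - ∑ j' ∈ Iio j, greedyAlloc v f i j')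
        ((f j / 2 - ∑ i' ∈ Iio i, greedyAlloc v f i' j * exchangeRate v i' j) /
          exchangeRate v i j) := by
  rw [greedyAlloc, if_pos h, sum_attach (Iio j) (greedyAlloc v f i),
    sum_attach (Iio i) (fun i' => greedyAlloc v f i' j * exchangeRate v i' j)]

theorem greedyAlloc_of_not_lt {i j : Fin n} (h : ¬ i < j) : greedyAlloc v f i j = 0 := by
  rw [greedyAlloc, if_neg h]

def greedySurplus (j : Fin n) : ℝ := ∑ i, greedyAlloc v f i j * v i

end Greedy

section GreedyBounds

variable {n : ℕ} {v f : Fin n → ℝ}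

theorem exchangeRate_pos (hv : StrictMono v) (hvpos : ∀ i, 0 < v i) {i j : Fin n} (h : i < j) :
    0 < exchangeRate v i j :=
  div_pos (hvpos i) (sub_pos.mpr (hv h))

theorem exchangeRate_mul_sub (hv : StrictMono v) {i j : Fin n} (h : i < j) :
    exchangeRate v i j * (v j - v i) = v i :=
  div_mul_cancel₀ _ (sub_pos.mpr (hv h)).ne'

theorem lt_of_greedyAlloc_ne_zero {i j : Fin n} (h : greedyAlloc v f i j ≠ 0) : i < j := by
  by_contra hij
  exact h (greedyAlloc_of_not_lt v f hij)

theorem greedyAlloc_le_supply {i j : Fin n} (h : greedyAlloc v f i j ≠ 0) :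
    greedyAlloc v f i j ≤ f i / 2 - ∑ j' ∈ Iio j, greedyAlloc v f i j' := by
  rw [greedyAlloc_of_lt v f (lt_of_greedyAlloc_ne_zero h)]
  exact min_le_left _ _

theorem greedyAlloc_mul_le_demand (hv : StrictMono v) (hvpos : ∀ i, 0 < v i) {i j : Fin n}
    (h : greedyAlloc v f i j * exchangeRate v i j ≠ 0) :
    greedyAlloc v f i j * exchangeRate v i j ≤
      f j / 2 - ∑ i' ∈ Iio i, greedyAlloc v f i' j * exchangeRate v i' j := by
  have hij := lt_of_greedyAlloc_ne_zero (left_ne_zero_of_mul h)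
  rw [← le_div_iff₀ (exchangeRate_pos hv hvpos hij), greedyAlloc_of_lt v f hij]
  exact min_le_right _ _

variable (hv : StrictMono v) (hvpos : ∀ i, 0 < v i) (hf : ∀ i, 0 ≤ f i)

include hf in
theorem sum_Iio_greedyAlloc_le (i j : Fin n) : ∑ j' ∈ Iio j, greedyAlloc v f i j' ≤ f i / 2 :=
  sum_Iio_le_of_ne_zero (by linarith [hf i]) (fun _ => greedyAlloc_le_supply) j

include hf in
theorem sum_Iic_greedyAlloc_le (i j : Fin n) : ∑ j' ∈ Iic j, greedyAlloc v f i j' ≤ f i / 2 :=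
  sum_Iic_le_of_ne_zero (by linarith [hf i]) (fun _ => greedyAlloc_le_supply) j

include hv hvpos hf

theorem sum_Iio_greedyAlloc_mul_le (i j : Fin n) :
    ∑ i' ∈ Iio i, greedyAlloc v f i' j * exchangeRate v i' j ≤ f j / 2 :=
  sum_Iio_le_of_ne_zero (by linarith [hf j]) (fun _ => greedyAlloc_mul_le_demand hv hvpos) i

theorem sum_Iic_greedyAlloc_mul_le (i j : Fin n) :
    ∑ i' ∈ Iic i, greedyAlloc v f i' j * exchangeRate v i' j ≤ f j / 2 :=
  sum_Iic_le_of_ne_zero (by linarith [hf j]) (fun _ => greedyAlloc_mul_le_demand hv hvpos) i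

theorem greedyAlloc_nonneg (i j : Fin n) : 0 ≤ greedyAlloc v f i j := by
  by_cases hij : i < j
  · rw [greedyAlloc_of_lt v f hij]
    exact le_min (sub_nonneg.mpr (sum_Iio_greedyAlloc_le hf i j))
      (div_nonneg (sub_nonneg.mpr (sum_Iio_greedyAlloc_mul_le hv hvpos hf i j))
        (exchangeRate_pos hv hvpos hij).le)
  · exact (greedyAlloc_of_not_lt v f hij).ge

end GreedyBounds

section GreedyPrefix

variable {n : ℕ} {v f : Fin n → ℝ} (hv : StrictMono v) (hvpos : ∀ i, 0 < v i)
include hv hvpos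

theorem sum_Iic_greedyAlloc_mul_eq {i j : Fin n} (hij : i < j)
    (hleft : ∑ j' ∈ Iic j, greedyAlloc v f i j' < f i / 2) :
    ∑ i' ∈ Iic i, greedyAlloc v f i' j * exchangeRate v i' j = f j / 2 := by
  have hsupply : greedyAlloc v f i j < f i / 2 - ∑ j' ∈ Iio j, greedyAlloc v f i j' := by
    rw [← sum_Iio_add_eq_sum_Iic] at hleft
    linarith
  have hdemand : greedyAlloc v f i j =
      (f j / 2 - ∑ i' ∈ Iio i, greedyAlloc v f i' j * exchangeRate v i' j) /
        exchangeRate v i j := by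
    rw [greedyAlloc_of_lt v f hij] at hsupply ⊢
    exact (min_choice _ _).resolve_left hsupply.ne
  rw [← sum_Iio_add_eq_sum_Iic, hdemand,
    div_mul_cancel₀ _ (exchangeRate_pos hv hvpos hij).ne']
  ring

theorem sub_mul_le_greedySurplus (hf : ∀ i, 0 ≤ f i) {t j : Fin n} (htj : t < j)
    (hleft : ∑ j' ∈ Iic j, greedyAlloc v f t j' < f t / 2) :
    (v j - v t) * f j ≤ 2 * greedySurplus v f j := by
  have hserved := sum_Iic_greedyAlloc_mul_eq hv hvpos htj hleft
  have hterm : ∀ i ∈ Iic t,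
      greedyAlloc v f i j * exchangeRate v i j * (v j - v t) ≤ greedyAlloc v f i j * v i := by
    intro i hi
    have hit : i < j := (mem_Iic.mp hi).trans_lt htj
    rw [mul_assoc, ← exchangeRate_mul_sub hv hit]
    gcongr
    · exact greedyAlloc_nonneg hv hvpos hf i j
    · exact (exchangeRate_pos hv hvpos hit).le
    · exact hv.monotone (mem_Iic.mp hi)
  calc (v j - v t) * f j
      = 2 * ∑ i ∈ Iic t, greedyAlloc v f i j * exchangeRate v i j * (v j - v t) := by
        rw [← sum_mul, hserved]; ring
    _ ≤ 2 * ∑ i ∈ Iic t, greedyAlloc v f i j * v i := by gcongr 2 * ?_; exact sum_le_sum hterm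
    _ ≤ 2 * greedySurplus v f j := by
        gcongr
        exact sum_le_univ_sum_of_nonneg
          fun i => mul_nonneg (greedyAlloc_nonneg hv hvpos hf i j) (hvpos i).le

theorem mul_le_of_greedy_threshold (hf : ∀ i, 0 ≤ f i) {t k i : Fin n} (hik : i ≤ k)
    (hleft : ∑ j ∈ Iic k, greedyAlloc v f t j < f t / 2)
    (hexhausted : i < t → f i / 2 ≤ ∑ j ∈ Iic k, greedyAlloc v f i j) :
    v i * f i ≤ 2 * ∑ j ∈ Iic k, greedyAlloc v f i j * v i + 2 * greedySurplus v f i +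
      if t ≤ i then v t * f i else 0 := by
  have hnonneg := greedyAlloc_nonneg hv hvpos hf
  have hsupplied : 0 ≤ ∑ j ∈ Iic k, greedyAlloc v f i j * v i :=
    sum_nonneg fun j _ => mul_nonneg (hnonneg i j) (hvpos i).le
  have hsurplus : 0 ≤ greedySurplus v f i :=
    sum_nonneg fun j _ => mul_nonneg (hnonneg j i) (hvpos j).le
  by_cases hti : t ≤ i
  · rw [if_pos hti]
    have hserved : (v i - v t) * f i ≤ 2 * greedySurplus v f i := by
      rcases hti.lt_or_eq with hti | rfl
      · refine sub_mul_le_greedySurplus hv hvpos hf hti (lt_of_le_of_lt ?_ hleft)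
        exact sum_le_sum_of_subset_of_nonneg (Iic_subset_Iic.mpr hik) fun j _ _ => hnonneg t j
      · simpa using hsurplus
    linarith
  · rw [if_neg hti, ← sum_mul]
    nlinarith [hexhausted (not_le.mp hti), hvpos i]

theorem exists_sum_Iic_mul_le (hf : ∀ i, 0 < f i) (k : Fin n) :
    ∃ t ≤ k, ∑ i ∈ Iic k, v i * f i ≤
      v t * ∑ i ∈ Icc t k, f i + 4 * ∑ j ∈ Iic k, greedySurplus v f j := by
  set unexhausted := (Iic k).filter fun i => ∑ j ∈ Iic k, greedyAlloc v f i j < f i / 2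
  have hk : k ∈ unexhausted := by
    have : ∑ j ∈ Iic k, greedyAlloc v f k j = 0 :=
      sum_eq_zero fun j hj => greedyAlloc_of_not_lt v f (mem_Iic.mp hj).not_gt
    simp only [unexhausted, mem_filter, mem_Iic, le_refl, this, true_and]
    linarith [hf k]
  set t := unexhausted.min' ⟨k, hk⟩
  obtain ⟨htk, hleft⟩ := mem_filter.mp (unexhausted.min'_mem ⟨k, hk⟩)
  have hbound := fun i (hi : i ∈ Iic k) =>
    mul_le_of_greedy_threshold hv hvpos (fun i => (hf i).le) (mem_Iic.mp hi) hleft fun hit => by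
      by_contra hlt
      exact (unexhausted.min'_le i (mem_filter.mpr ⟨hi, not_le.mp hlt⟩)).not_gt hit
  have hswap : ∑ i ∈ Iic k, ∑ j ∈ Iic k, greedyAlloc v f i j * v i ≤
      ∑ j ∈ Iic k, greedySurplus v f j := by
    rw [sum_comm]
    exact sum_le_sum fun j _ => sum_le_univ_sum_of_nonneg
      fun i => mul_nonneg (greedyAlloc_nonneg hv hvpos (fun i => (hf i).le) i j) (hvpos i).le
  have htail : ∑ i ∈ Iic k, (if t ≤ i then v t * f i else 0) = v t * ∑ i ∈ Icc t k, f i := by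
    rw [← sum_filter, mul_sum]
    congr 1
    ext i
    simp only [mem_filter, mem_Iic, mem_Icc]
    tauto
  refine ⟨t, mem_Iic.mp htk, (sum_le_sum hbound).trans ?_⟩
  rw [sum_add_distrib, sum_add_distrib, ← mul_sum, ← mul_sum, htail]
  linarith

end GreedyPrefix

noncomputable section GreedyScheme

variable {n : ℕ} (v f : Fin n → ℝ)

def greedyLeftover (l : Fin n) : ℝ :=
  f l - ∑ j, greedyAlloc v f l j - ∑ i, greedyAlloc v f i l * exchangeRate v i l

def greedySignal : Fin n × Fin n ⊕ Fin n → Fin n → ℝ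
  | .inl (i, j) => if i < j then eqRevSignal v i j else Pi.single i 1
  | .inr i => Pi.single i 1

def greedyWeight : Fin n × Fin n ⊕ Fin n → ℝ
  | .inl (i, j) => greedyAlloc v f i j * v j / (v j - v i)
  | .inr i => greedyLeftover v f i

variable {v f} (hv : StrictMono v) (hvpos : ∀ i, 0 < v i)
include hv hvpos

theorem greedyWeight_mul_greedySignal_inl (i j l : Fin n) :
    greedyWeight v f (.inl (i, j)) * greedySignal v (.inl (i, j)) l =
      (Pi.single i (greedyAlloc v f i j) : Fin n → ℝ) l +
        (Pi.single j (greedyAlloc v f i j * exchangeRate v i j) : Fin n → ℝ) l := by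
  by_cases hij : i < j
  · have hvj := (hvpos j).ne'
    have hsub := (sub_pos.mpr (hv hij)).ne'
    simp only [greedyWeight, greedySignal, if_pos hij, eqRevSignal, exchangeRate, Pi.add_apply,
      Pi.single_apply]
    split_ifs <;> field_simp <;> ring
  · simp [greedyWeight, greedyAlloc_of_not_lt v f hij]

theorem isSignal_greedySignal (x : Fin n × Fin n ⊕ Fin n) : IsSignal (greedySignal v x) := by
  rcases x with ⟨i, j⟩ | i
  · by_cases hij : i < j
    · simpa [greedySignal, hij] using isSignal_eqRevSignal hv hvpos hij
    · simpa [greedySignal, hij] using isSignal_single i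
  · exact isSignal_single i

omit hvpos in
theorem greedySignal_shape (x : Fin n × Fin n ⊕ Fin n) :
    IsSingleton (greedySignal v x) ∨ IsEqRevBinary v (greedySignal v x) := by
  rcases x with ⟨i, j⟩ | i
  · by_cases hij : i < j
    · simpa [greedySignal, hij] using Or.inr (isEqRevBinary_eqRevSignal hv hij)
    · left
      simpa [greedySignal, hij] using isSingleton_single i
  · exact Or.inl (isSingleton_single i)

theorem sum_greedyWeight_mul_greedySignal (l : Fin n) :
    ∑ x, greedyWeight v f x * greedySignal v x l = f l := by
  have hsupply : ∑ i, ∑ j, (Pi.single i (greedyAlloc v f i j) : Fin n → ℝ) l =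
      ∑ j, greedyAlloc v f l j := by
    rw [sum_comm]
    simp
  have hleftover : ∑ i, greedyWeight v f (.inr i) * greedySignal v (.inr i) l =
      greedyLeftover v f l := by
    simp [greedyWeight, greedySignal, Pi.single_apply]
  simp only [Fintype.sum_sum_type, Fintype.sum_prod_type,
    greedyWeight_mul_greedySignal_inl hv hvpos, sum_add_distrib, hsupply, hleftover]
  simp [greedyLeftover]

variable (hf : ∀ i, 0 ≤ f i)
include hf

theorem greedyWeight_nonneg [NeZero n] (x : Fin n × Fin n ⊕ Fin n) : 0 ≤ greedyWeight v f x := by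
  rcases x with ⟨i, j⟩ | l
  · by_cases hij : i < j
    · exact div_nonneg (mul_nonneg (greedyAlloc_nonneg hv hvpos hf i j) (hvpos j).le)
        (sub_pos.mpr (hv hij)).le
    · simp [greedyWeight, greedyAlloc_of_not_lt v f hij]
  · have hsupply := sum_Iic_greedyAlloc_le (v := v) hf l ⊤
    have hdemand := sum_Iic_greedyAlloc_mul_le hv hvpos hf ⊤ l
    rw [Iic_top] at hsupply hdemand
    simp only [greedyWeight, greedyLeftover]
    linarith

theorem greedySurplus_le_sum_greedyWeight_mul_cs [NeZero n] (l : Fin n) :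
    greedySurplus v f l ≤
      ∑ x, greedyWeight v f x * greedySignal v x l * cs v (greedySignal v x) l := by
  set term := fun x => greedyWeight v f x * greedySignal v x l * cs v (greedySignal v x) l
  have hterm_nonneg : ∀ x, 0 ≤ term x := fun x =>
    mul_nonneg (mul_nonneg (greedyWeight_nonneg hv hvpos hf x)
      ((isSignal_greedySignal hv hvpos x).1 l)) (cs_nonneg _ l)
  have hpair : ∀ i, greedyAlloc v f i l * v i ≤ term (.inl (i, l)) := by
    intro i
    simp only [term, greedyWeight_mul_greedySignal_inl hv hvpos, Pi.single_eq_same]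
    by_cases hil : i < l
    · rw [Pi.single_eq_of_ne hil.ne', zero_add, greedySignal, if_pos hil, mul_assoc]
      calc greedyAlloc v f i l * v i
          = greedyAlloc v f i l * (exchangeRate v i l * (v l - v i)) := by
            rw [exchangeRate_mul_sub hv hil]
        _ ≤ greedyAlloc v f i l * (exchangeRate v i l * cs v (eqRevSignal v i l) l) := by
            have halloc := greedyAlloc_nonneg hv hvpos hf i l
            have hrate := (exchangeRate_pos hv hvpos hil).le
            gcongr
            exact sub_le_cs_eqRevSignal hv hvpos hil l
    · simp [greedyAlloc_of_not_lt v f hil]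
  calc greedySurplus v f l = ∑ i, greedyAlloc v f i l * v i := rfl
    _ ≤ ∑ i, term (.inl (i, l)) := sum_le_sum fun i _ => hpair i
    _ ≤ ∑ i, ∑ j, term (.inl (i, j)) :=
        sum_le_sum fun i _ =>
          single_le_sum (f := fun j => term (.inl (i, j))) (fun j _ => hterm_nonneg _) (mem_univ l)
    _ ≤ ∑ x, term x := by
        rw [Fintype.sum_sum_type, Fintype.sum_prod_type]
        linarith [sum_nonneg fun i (_ : i ∈ univ) => hterm_nonneg (.inr i)]

end GreedyScheme

theorem exists_scheme_greedySurplus_le {n : ℕ} [NeZero n] {v f : Fin n → ℝ} (hv : StrictMono v)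
    (hvpos : ∀ i, 0 < v i) (hf : ∀ i, 0 < f i) (hsum : ∑ i, f i = 1) :
    ∃ Z : Scheme n f, (∀ q, IsSingleton (Z.sig q) ∨ IsEqRevBinary v (Z.sig q)) ∧
      ∀ l, greedySurplus v f l ≤ f l * csZ v f Z l := by
  have hf' : ∀ i, 0 ≤ f i := fun i => (hf i).le
  refine ⟨Scheme.ofFintype (greedySignal v) (greedyWeight v f) (isSignal_greedySignal hv hvpos)
    (greedyWeight_nonneg hv hvpos hf') (sum_greedyWeight_mul_greedySignal hv hvpos) hsum,
    fun q => greedySignal_shape hv _, fun l => ?_⟩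
  rw [Scheme.mul_csZ_ofFintype _ _ _ _ _ _ _ (hf l).ne']
  exact greedySurplus_le_sum_greedyWeight_mul_cs hv hvpos hf' l

theorem stmt11 (n : ℕ) [NeZero n] (v f : Fin n → ℝ)
    (hv : StrictMono v) (hvpos : ∀ i, 0 < v i)
    (hf : ∀ i, 0 < f i) (hsum : ∑ i, f i = 1) :
    ∃ Z : Scheme n f,
      (∀ q, IsSingleton (Z.sig q) ∨ IsEqRevBinary v (Z.sig q)) ∧
      ∀ k : Fin n,
        (∑ i ∈ Finset.univ.filter (fun i => i ≤ k), v i * f i) -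
            (Finset.univ.filter (fun i => i ≤ k)).sup'
              ⟨k, by simp⟩
              (fun i => v i * ∑ j ∈ Finset.univ.filter (fun j => i ≤ j ∧ j ≤ k), f j)
          ≤ 4 * ∑ i ∈ Finset.univ.filter (fun i => i ≤ k), f i * csZ v f Z i := by
  obtain ⟨Z, hshape, hsurplus⟩ := exists_scheme_greedySurplus_le hv hvpos hf hsum
  refine ⟨Z, hshape, fun k => ?_⟩
  obtain ⟨t, htk, hprefix⟩ := exists_sum_Iic_mul_le hv hvpos hf k
  have hIic : univ.filter (· ≤ k) = Iic k := by ext; simp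
  have hIcc : univ.filter (fun j => t ≤ j ∧ j ≤ k) = Icc t k := by ext; simp
  have hmax := le_sup' (fun i => v i * ∑ j ∈ univ.filter (fun j => i ≤ j ∧ j ≤ k), f j)
    (show t ∈ univ.filter (· ≤ k) by simpa using htk)
  rw [hIcc] at hmax
  have hcs : ∑ j ∈ Iic k, greedySurplus v f j ≤ ∑ i ∈ Iic k, f i * csZ v f Z i :=
    sum_le_sum fun j _ => hsurplus j
  rw [← hIic] at hprefix hcs
  linarith

end PD
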